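/- arXiv:2310.07884 — 2 statements merged into one kernel-verified Lean document; each statement's English description precedes it below -/
import Mathlib

section
/- Let μ̄ ≥ e and set n = ⌈μ̄·log(μ̄)⌉. Define the probability vector x^{(n)} on {1,...,n} by x^{(n)}_1 = 1/(1+H_{n−1}) and x^{(n)}_i = (1/(1+H_{n−1}))/(i−1) for i = 2,...,n. Then for every distribution p on the positive integers whose mean satisfies Σ_{i=1}^∞ i·p_i ≤ μ̄, one has Σ_{l=1}^{n} x^{(n)}_l · A(p, q^{(l)}) ≥ (1/(2 + log(n−1)))·(1 − 1/log(μ̄)). -/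
open scoped BigOperators

/-- `lam p i = Σ_{l=i}^∞ p_l / l`. -/
noncomputable def lam (p : ℕ → ℝ) (i : ℕ) : ℝ := ∑' l : ℕ, if i ≤ l then p l / (l : ℝ) else 0

/-- `U q i = ∏_{l=1}^i (1 - q_l / l)`, with `U q 0 = 1`. -/
noncomputable def U (q : ℕ → ℝ) (i : ℕ) : ℝ := ∏ l ∈ Finset.Icc 1 i, (1 - q l / (l : ℝ))

/-- `A p q = Σ_{i=1}^∞ U_{i-1}(q) q_i λ_i(p)`. -/
noncomputable def A (p q : ℕ → ℝ) : ℝ := ∑' i : ℕ, U q i * q (i + 1) * lam p (i + 1)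

/-- The single-threshold strategy `q^{(l)}`. -/
def thresh (l : ℕ) : ℕ → ℝ := fun i => if l ≤ i then 1 else 0

/-- The `n`-th harmonic number. -/
noncomputable def H (n : ℕ) : ℝ := ∑ i ∈ Finset.Icc 1 n, (1 : ℝ) / i

/-- The randomization distribution `x^{(n)}` over thresholds. -/
noncomputable def xdist (n : ℕ) : ℕ → ℝ := fun i =>
  if i = 1 then 1 / (1 + H (n - 1))
  else if 2 ≤ i ∧ i ≤ n then (1 / (1 + H (n - 1))) / ((i : ℝ) - 1)
  else 0

/-!
Mixing the thresholds with the weights `x^{(n)}` makes every stage `i < n` stop with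
the same probability `c = 1 / (1 + H_{n-1})`, so `∑ₗ xₗ A(p, q^{(l)}) ≥ c (λ₁ + ⋯ + λₙ)`.
Exchanging sums, `λ₁ + ⋯ + λₙ = ∑ₘ min(n, m) pₘ / m ≥ 1 - mean / n ≥ 1 - 1 / log μ̄`
since `n ≥ μ̄ log μ̄`, and `c ≥ 1 / (2 + log (n - 1))` because `H_m ≤ 1 + log m`.
-/

open Finset

lemma one_sub_div_le_min_div {a b : ℝ} (ha : 0 < a) (hb : 0 < b) : 1 - b / a ≤ min a b / b := by
  rcases le_total a b with h | h
  · rw [min_eq_left h]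
    linarith [(one_le_div ha).mpr h, div_nonneg ha.le hb.le]
  · rw [min_eq_right h, div_self hb.ne']
    linarith [div_nonneg hb.le ha.le]

lemma abs_natCast_min_mul_div_le (x : ℝ) (N l : ℕ) : |(min N l : ℕ) * (x / l)| ≤ |x| := by
  rcases Nat.eq_zero_or_pos l with rfl | hl
  · simp
  calc |(min N l : ℕ) * (x / l)| = (min N l : ℕ) / l * |x| := by
        rw [abs_mul, abs_div, Nat.abs_cast, Nat.abs_cast]; ring
    _ ≤ 1 * |x| := by
        gcongr
        exact div_le_one_of_le₀ (by exact_mod_cast min_le_right N l) l.cast_nonneg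
    _ = |x| := one_mul _

section Lambda

variable {p : ℕ → ℝ}

lemma lam_nonneg (hp : ∀ i, 1 ≤ i → 0 ≤ p i) (j : ℕ) : 0 ≤ lam p j :=
  tsum_nonneg fun l => by
    split_ifs
    · rcases Nat.eq_zero_or_pos l with rfl | hl
      · simp
      · exact div_nonneg (hp l hl) l.cast_nonneg
    · rfl

lemma summable_div_natCast (hsum : Summable p) : Summable fun l : ℕ => p l / l :=
  hsum.abs.of_norm_bounded fun l => by
    rw [Real.norm_eq_abs, abs_div, Nat.abs_cast]
    exact div_nat_le_self_of_nonnneg (abs_nonneg _) l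

lemma summable_natCast_min_mul_div (hsum : Summable p) (N : ℕ) :
    Summable fun l : ℕ => (min N l : ℕ) * (p l / l) :=
  hsum.abs.of_norm_bounded fun l => abs_natCast_min_mul_div_le (p l) N l

lemma sum_range_lam_succ (hsum : Summable p) (N : ℕ) :
    ∑ i ∈ range N, lam p (i + 1) = ∑' l : ℕ, (min N l : ℕ) * (p l / l) := by
  have hterm : ∀ i ∈ range N,
      Summable fun l : ℕ => if i + 1 ≤ l then p l / (l : ℝ) else 0 :=
    fun i _ => (summable_div_natCast hsum).norm.of_norm_bounded fun l => by
      split_ifs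
      · exact le_rfl
      · rw [norm_zero]; exact norm_nonneg _
  unfold lam
  rw [← Summable.tsum_finsetSum hterm]
  congr 1 with l
  have hfilter : {i ∈ range N | i + 1 ≤ l} = range (min N l) := by
    ext i; simp only [mem_filter, mem_range]; omega
  rw [← sum_filter, sum_const, nsmul_eq_mul, hfilter, card_range]

lemma summable_lam_succ (hp : ∀ i, 1 ≤ i → 0 ≤ p i) (hsum : Summable p) :
    Summable fun i => lam p (i + 1) :=
  summable_of_sum_range_le (fun i => lam_nonneg hp (i + 1)) fun N => by
    rw [sum_range_lam_succ hsum]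
    exact (summable_natCast_min_mul_div hsum N).tsum_le_tsum
      (fun l => (le_abs_self _).trans (abs_natCast_min_mul_div_le (p l) N l)) hsum.abs

lemma one_sub_tsum_div_le_sum_range_lam_succ (hp : ∀ i, 1 ≤ i → 0 ≤ p i)
    (hps : HasSum (fun i => p (i + 1)) 1) (hmean : Summable fun i : ℕ => (i : ℝ) * p i)
    {N : ℕ} (hN : 0 < N) :
    1 - (∑' i : ℕ, (i : ℝ) * p i) / N ≤ ∑ i ∈ range N, lam p (i + 1) := by
  have hsum : Summable p := (summable_nat_add_iff 1).mp hps.summable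
  have hmean' :
      HasSum (fun l : ℕ => ((l + 1 : ℕ) : ℝ) * p (l + 1)) (∑' i : ℕ, (i : ℝ) * p i) := by
    rw [hmean.tsum_eq_zero_add, Nat.cast_zero, zero_mul, zero_add]
    exact ((summable_nat_add_iff 1).mpr hmean).hasSum
  have hmin := summable_natCast_min_mul_div hsum N
  rw [sum_range_lam_succ hsum, hmin.tsum_eq_zero_add, Nat.cast_zero, div_zero, mul_zero,
    zero_add]
  refine hasSum_le (fun l => ?_) (hps.sub (hmean'.div_const N))
    ((summable_nat_add_iff 1).mpr hmin).hasSum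
  have hN' : (0 : ℝ) < N := by exact_mod_cast hN
  have hl : (0 : ℝ) < (l + 1 : ℕ) := by positivity
  have key :=
    mul_le_mul_of_nonneg_right (one_sub_div_le_min_div hN' hl) (hp (l + 1) (by omega))
  rw [Nat.cast_min]
  calc p (l + 1) - ((l + 1 : ℕ) : ℝ) * p (l + 1) / N
        = (1 - ((l + 1 : ℕ) : ℝ) / N) * p (l + 1) := by ring
    _ ≤ min (N : ℝ) (l + 1 : ℕ) / (l + 1 : ℕ) * p (l + 1) := key
    _ = min (N : ℝ) (l + 1 : ℕ) * (p (l + 1) / (l + 1 : ℕ)) := by ring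

end Lambda

section Strategy

variable {q : ℕ → ℝ}

lemma U_succ (q : ℕ → ℝ) (i : ℕ) : U q (i + 1) = U q i * (1 - q (i + 1) / (i + 1)) := by
  rw [U, prod_Icc_succ_top (by omega), Nat.cast_succ, U]

lemma one_sub_div_natCast_mem_Icc (hq0 : ∀ i, 0 ≤ q i) (hq1 : ∀ i, q i ≤ 1) {l : ℕ}
    (hl : 1 ≤ l) :
    1 - q l / l ∈ Set.Icc (0 : ℝ) 1 := by
  have hl' : (1 : ℝ) ≤ l := by exact_mod_cast hl
  constructor
  · rw [sub_nonneg, div_le_one (by linarith)]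
    linarith [hq1 l]
  · linarith [div_nonneg (hq0 l) (by linarith : (0 : ℝ) ≤ l)]

lemma U_mem_Icc (hq0 : ∀ i, 0 ≤ q i) (hq1 : ∀ i, q i ≤ 1) (i : ℕ) :
    U q i ∈ Set.Icc (0 : ℝ) 1 := by
  have hfac := fun l (hl : l ∈ Icc 1 i) =>
    one_sub_div_natCast_mem_Icc hq0 hq1 (mem_Icc.mp hl).1
  exact ⟨prod_nonneg fun l hl => (hfac l hl).1,
    prod_le_one (fun l hl => (hfac l hl).1) fun l hl => (hfac l hl).2⟩

variable {p : ℕ → ℝ}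

lemma summable_U_mul_lam (hq0 : ∀ i, 0 ≤ q i) (hq1 : ∀ i, q i ≤ 1)
    (hp : ∀ i, 1 ≤ i → 0 ≤ p i) (hsum : Summable p) :
    Summable fun i => U q i * q (i + 1) * lam p (i + 1) := by
  refine (summable_lam_succ hp hsum).of_nonneg_of_le (fun i => ?_) fun i => ?_
  · exact mul_nonneg (mul_nonneg (U_mem_Icc hq0 hq1 i).1 (hq0 _)) (lam_nonneg hp _)
  · exact mul_le_of_le_one_left (lam_nonneg hp _)
      (mul_le_one₀ (U_mem_Icc hq0 hq1 i).2 (hq0 _) (hq1 _))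

lemma sum_range_U_mul_lam_le_A (hq0 : ∀ i, 0 ≤ q i) (hq1 : ∀ i, q i ≤ 1)
    (hp : ∀ i, 1 ≤ i → 0 ≤ p i) (hsum : Summable p) (N : ℕ) :
    ∑ i ∈ range N, U q i * q (i + 1) * lam p (i + 1) ≤ A p q :=
  (summable_U_mul_lam hq0 hq1 hp hsum).sum_le_tsum _ fun i _ =>
    mul_nonneg (mul_nonneg (U_mem_Icc hq0 hq1 i).1 (hq0 _)) (lam_nonneg hp _)

end Strategy

section Threshold

lemma thresh_nonneg (l i : ℕ) : 0 ≤ thresh l i := by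
  unfold thresh; split_ifs <;> norm_num

lemma thresh_le_one (l i : ℕ) : thresh l i ≤ 1 := by
  unfold thresh; split_ifs <;> norm_num

lemma U_thresh_of_lt {l i : ℕ} (h : i < l) : U (thresh l) i = 1 :=
  prod_eq_one fun j hj => by
    rw [thresh, if_neg (by simp at hj; omega), zero_div, sub_zero]

/-- `U_i(q^{(l)}) = (l - 1) / i`, multiplied out so that the case `i = 0, l = 1` is included. -/
lemma U_thresh_mul_natCast {l i : ℕ} (hl : 1 ≤ l) (hli : l ≤ i + 1) :
    U (thresh l) i * i = l - 1 := by
  induction i, (by omega : l - 1 ≤ i) using Nat.le_induction with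
  | base => rw [U_thresh_of_lt (by omega), one_mul, Nat.cast_pred hl]
  | succ i hi ih =>
    rw [U_succ, thresh, if_pos (by omega), Nat.cast_succ, ← ih (by omega)]
    field_simp
    ring

end Threshold

section Randomization

lemma H_nonneg (n : ℕ) : 0 ≤ H n :=
  sum_nonneg fun i _ => by positivity

lemma xdist_nonneg (n l : ℕ) : 0 ≤ xdist n l := by
  have hH := H_nonneg (n - 1)
  have hl : 2 ≤ l → (0 : ℝ) ≤ l - 1 := fun h => by
    have : (2 : ℝ) ≤ l := by exact_mod_cast h
    linarith
  unfold xdist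
  split_ifs with _ h
  · positivity
  · exact div_nonneg (by positivity) (hl h.1)
  · rfl

lemma xdist_mul_U_thresh {n l i : ℕ} (hl : 2 ≤ l) (hln : l ≤ n) (hli : l ≤ i + 1) :
    xdist n l * U (thresh l) i = 1 / (1 + H (n - 1)) / i := by
  have hU := U_thresh_mul_natCast (by omega : 1 ≤ l) hli
  have hl' : (l : ℝ) - 1 ≠ 0 := by
    have : (2 : ℝ) ≤ l := by exact_mod_cast hl
    linarith
  have hi : (i : ℝ) ≠ 0 := by
    have : (1 : ℝ) ≤ i := by exact_mod_cast (by omega : 1 ≤ i)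
    linarith
  rw [xdist, if_neg (by omega), if_pos ⟨hl, hln⟩, eq_div_iff hi, mul_assoc, hU]
  field_simp

lemma sum_xdist_mul_U_thresh {n i : ℕ} (hi : i < n) :
    ∑ l ∈ Icc 1 n, xdist n l * (U (thresh l) i * thresh l (i + 1)) = 1 / (1 + H (n - 1)) := by
  rw [← sum_subset (Icc_subset_Icc_right (by omega : i + 1 ≤ n)) fun l hl hl' => by
    rw [thresh, if_neg (by simp at hl hl'; omega), mul_zero, mul_zero]]
  rw [sum_congr rfl fun l hl => by rw [thresh, if_pos (mem_Icc.mp hl).2, mul_one]]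
  rcases i with _ | i
  · simp [xdist, U_thresh_of_lt]
  have hU1 : U (thresh 1) (i + 1) = 0 := by
    have h := U_thresh_mul_natCast (le_refl 1) (by omega : 1 ≤ i + 1 + 1)
    rwa [Nat.cast_one, sub_self, mul_eq_zero,
      or_iff_left (Nat.cast_ne_zero.mpr i.succ_ne_zero)] at h
  have hsplit : Icc 1 (i + 1 + 1) = insert 1 (Icc 2 (i + 1 + 1)) := by
    ext l; simp only [mem_Icc, mem_insert]; omega
  rw [hsplit, sum_insert (by simp), hU1, mul_zero, zero_add,
    sum_congr rfl fun l hl => xdist_mul_U_thresh (mem_Icc.mp hl).1 (by simp at hl; omega)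
      (mem_Icc.mp hl).2, sum_const, Nat.card_Icc, show i + 1 + 1 + 1 - 2 = i + 1 by omega,
    nsmul_eq_mul]
  field_simp

lemma mul_sum_range_lam_succ_le_sum_xdist_mul_A {p : ℕ → ℝ} (hp : ∀ i, 1 ≤ i → 0 ≤ p i)
    (hsum : Summable p) (n : ℕ) :
    1 / (1 + H (n - 1)) * ∑ i ∈ range n, lam p (i + 1) ≤
      ∑ l ∈ Icc 1 n, xdist n l * A p (thresh l) :=
  calc 1 / (1 + H (n - 1)) * ∑ i ∈ range n, lam p (i + 1)
      = ∑ i ∈ range n, ∑ l ∈ Icc 1 n,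
          xdist n l * (U (thresh l) i * thresh l (i + 1) * lam p (i + 1)) := by
        rw [mul_sum]
        refine sum_congr rfl fun i hi => ?_
        simp_rw [← mul_assoc, ← sum_mul, mul_assoc, sum_xdist_mul_U_thresh (mem_range.mp hi)]
    _ = ∑ l ∈ Icc 1 n, xdist n l *
          ∑ i ∈ range n, U (thresh l) i * thresh l (i + 1) * lam p (i + 1) := by
        rw [sum_comm]; simp_rw [mul_sum]
    _ ≤ ∑ l ∈ Icc 1 n, xdist n l * A p (thresh l) :=
        sum_le_sum fun l _ => mul_le_mul_of_nonneg_left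
          (sum_range_U_mul_lam_le_A (thresh_nonneg l) (thresh_le_one l) hp hsum n)
          (xdist_nonneg n l)

end Randomization

lemma one_div_two_add_log_le {n : ℕ} (hn : 1 ≤ n) :
    1 / (2 + Real.log ((n : ℝ) - 1)) ≤ 1 / (1 + H (n - 1)) := by
  have hH : H (n - 1) = harmonic (n - 1) := by
    simp [H, harmonic_eq_sum_Icc]
  have hlog := harmonic_le_one_add_log (n - 1)
  rw [Nat.cast_pred hn] at hlog
  have := H_nonneg (n - 1)
  exact one_div_le_one_div_of_le (by positivity) (by linarith)

theorem stmt3 (μ : ℝ) (hμ : Real.exp 1 ≤ μ)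
    (n : ℕ) (hn : n = ⌈μ * Real.log μ⌉₊)
    (p : ℕ → ℝ) (hp : ∀ i, 1 ≤ i → 0 ≤ p i)
    (hps : HasSum (fun i : ℕ => p (i + 1)) 1)
    (hsummean : Summable (fun i : ℕ => (i : ℝ) * p i))
    (hmean : ∑' i : ℕ, (i : ℝ) * p i ≤ μ) :
    (1 / (2 + Real.log ((n : ℝ) - 1))) * (1 - 1 / Real.log μ) ≤
      ∑ l ∈ Finset.Icc 1 n, xdist n l * A p (thresh l) := by
  have hμ0 : 0 < μ := (Real.exp_pos 1).trans_le hμ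
  have hlog : 1 ≤ Real.log μ := by rwa [Real.le_log_iff_exp_le hμ0]
  have hμn : μ * Real.log μ ≤ n := hn ▸ Nat.le_ceil _
  have hn0 : 0 < n := by exact_mod_cast (by nlinarith : (0 : ℝ) < n)
  have hmarkov : (∑' i : ℕ, (i : ℝ) * p i) / n ≤ 1 / Real.log μ := by
    calc (∑' i : ℕ, (i : ℝ) * p i) / n ≤ μ / (μ * Real.log μ) :=
          div_le_div₀ hμ0.le hmean (by positivity) hμn
      _ = 1 / Real.log μ := by rw [div_mul_eq_div_div, div_self hμ0.ne']
  have hlam := one_sub_tsum_div_le_sum_range_lam_succ hp hps hsummean hn0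
  calc 1 / (2 + Real.log ((n : ℝ) - 1)) * (1 - 1 / Real.log μ)
      ≤ 1 / (1 + H (n - 1)) * ∑ i ∈ Finset.range n, lam p (i + 1) :=
        mul_le_mul (one_div_two_add_log_le hn0) (by linarith)
          (sub_nonneg.2 (div_le_one_of_le₀ hlog (by linarith)))
          (by have := H_nonneg (n - 1); positivity)
    _ ≤ _ := mul_sum_range_lam_succ_le_sum_xdist_mul_A hp
          ((summable_nat_add_iff 1).mp hps.summable) n
end

section
/- For n ≥ 15 let l*_n = ⌈n/e²⌉ and define a^{(n)}_i = 0 for 1 ≤ i < l*_n and a^{(n)}_i = ((l*_n − 1)/i)·Σ_{j=l*_n}^{i} 1/(j−1) for l*_n ≤ i ≤ n. Let ā^{(n)} = (1/n)·Σ_{i=1}^n a^{(n)}_i and a*^{(n)} = max_{1≤i≤n} a^{(n)}_i. Then liminf_{n→∞} ā^{(n)} ≥ 2/e² and lim_{n→∞} a*^{(n)} = 1/e. -/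
open scoped BigOperators

/-- `l*_n = ⌈n / e²⌉`. -/
noncomputable def lstar (n : ℕ) : ℕ := ⌈(n : ℝ) / Real.exp 2⌉₊

/-- The vector `a^{(n)}`: `a_i = 0` for `i < l*_n`, and
`a_i = ((l*_n - 1)/i) Σ_{j=l*_n}^i 1/(j-1)` for `i ≥ l*_n`. -/
noncomputable def aseq (n i : ℕ) : ℝ :=
  if lstar n ≤ i then
    (((lstar n : ℝ) - 1) / (i : ℝ)) * ∑ j ∈ Finset.Icc (lstar n) i, 1 / ((j : ℝ) - 1)
  else 0

/-!
Write `m = l*_n - 1` and `H(a, b) = ∑_{a ≤ k < b} 1/k`, so that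
`a_i = (m / i) H(m, i)` for every `i`.
Comparing `1/k` with `log (k + 1) - log k` gives `log (b / a) ≤ H(a, b) ≤ log ((b - 1) / (a - 1))`.

For the mean, exchanging the order of summation gives
`∑ a_i ≥ m ∑_{m ≤ k < n} (1/k) log ((n + 1) / (k + 1))`, which telescopes to at least
`m log² ((n + 1) / l*_n) / 2 ≈ (n / e²) · 2² / 2`.

For the maximum, `log x ≤ x / e` bounds every `a_i` by `m / ((m - 1) e)`, while `i = ⌈e m⌉` has
`H(m, i) ≥ 1`, hence `a_i ≥ m / (e m + 1)`; both bounds tend to `1 / e`.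
-/

open Finset Real Filter Topology

section Telescoping

variable {M : Type*} [AddCommGroup M] [PartialOrder M] [IsOrderedAddMonoid M]
  {f g : ℕ → M} {m n : ℕ}

theorem Finset.sum_Ico_le_sub_of_le_sub (hmn : m ≤ n) (h : ∀ k ∈ Ico m n, f k ≤ g (k + 1) - g k) :
    ∑ k ∈ Ico m n, f k ≤ g n - g m :=
  (sum_le_sum h).trans_eq (sum_Ico_sub g hmn)

theorem Finset.sub_le_sum_Ico_of_sub_le (hmn : m ≤ n) (h : ∀ k ∈ Ico m n, g (k + 1) - g k ≤ f k) :
    g n - g m ≤ ∑ k ∈ Ico m n, f k :=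
  (sum_Ico_sub g hmn).symm.trans_le (sum_le_sum h)

end Telescoping

theorem Real.log_add_one_sub_log_le {x : ℝ} (hx : 0 < x) : log (x + 1) - log x ≤ x⁻¹ := by
  have h := log_le_sub_one_of_pos (div_pos (by linarith : 0 < x + 1) hx)
  rwa [log_div (by linarith) hx.ne', add_div, div_self hx.ne', add_sub_cancel_left, one_div] at h

theorem Real.inv_add_one_le_log_add_one_sub_log {x : ℝ} (hx : 0 < x) :
    (x + 1)⁻¹ ≤ log (x + 1) - log x := by
  have h := one_sub_inv_le_log_of_pos (div_pos (by linarith : 0 < x + 1) hx)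
  rw [log_div (by linarith) hx.ne', inv_div] at h
  convert h using 1
  field_simp
  ring

theorem log_sub_log_le_sum_Ico_inv {a b : ℕ} (ha : 0 < a) (hab : a ≤ b) :
    log b - log a ≤ ∑ k ∈ Ico a b, (k : ℝ)⁻¹ :=
  sub_le_sum_Ico_of_sub_le (g := fun k : ℕ => log k) hab fun k hk => by
    have hk : (0 : ℝ) < k := by exact_mod_cast ha.trans_le (mem_Ico.1 hk).1
    simpa using log_add_one_sub_log_le hk

theorem sum_Ico_inv_le_log_sub_log {a b : ℕ} (ha : 1 < a) (hab : a ≤ b) :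
    ∑ k ∈ Ico a b, (k : ℝ)⁻¹ ≤ log ((b : ℝ) - 1) - log ((a : ℝ) - 1) :=
  sum_Ico_le_sub_of_le_sub (g := fun k : ℕ => log ((k : ℝ) - 1)) hab fun k hk => by
    have hk : (1 : ℝ) < k := by exact_mod_cast ha.trans_le (mem_Ico.1 hk).1
    simpa using inv_add_one_le_log_add_one_sub_log (sub_pos.2 hk)

theorem Real.log_le_div_exp_one {x : ℝ} (hx : 0 < x) : log x ≤ x / exp 1 := by
  have h := log_le_sub_one_of_pos (div_pos hx (exp_pos 1))
  rw [log_div hx.ne' (exp_pos 1).ne', log_exp] at h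
  linarith

theorem sq_log_sub_log_div_two_le_sum_inv_mul_sum_Ico_inv {m n : ℕ} (hm : 0 < m) (hmn : m ≤ n) :
    (log (n + 1) - log (m + 1)) ^ 2 / 2 ≤ ∑ i ∈ Icc 1 n, (i : ℝ)⁻¹ * ∑ k ∈ Ico m i, (k : ℝ)⁻¹ := by
  -- with `c = log (n + 1) - log (k + 1) ≥ 0` and `d = log (k + 2) - log (k + 1) ≤ k⁻¹`,
  -- the telescoping step is `(c² - (c - d)²) / 2 ≤ c d ≤ k⁻¹ c`
  have hsq : (log (n + 1) - log (m + 1)) ^ 2 / 2 ≤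
      ∑ k ∈ Ico m n, (k : ℝ)⁻¹ * (log (n + 1) - log (k + 1)) := by
    have := sub_le_sum_Ico_of_sub_le
      (f := fun k : ℕ => (k : ℝ)⁻¹ * (log (n + 1) - log (k + 1)))
      (g := fun k : ℕ => -((log (n + 1) - log ((k : ℝ) + 1)) ^ 2 / 2)) hmn fun k hk => by
        obtain ⟨hmk, hkn⟩ := mem_Ico.1 hk
        have hk : (0 : ℝ) < k := by exact_mod_cast hm.trans_le hmk
        have hc : 0 ≤ log (n + 1) - log (k + 1) :=
          sub_nonneg.2 (log_le_log (by positivity) (by norm_cast; omega))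
        have hd : log (k + 1 + 1) - log (k + 1) ≤ (k : ℝ)⁻¹ :=
          (log_add_one_sub_log_le (by positivity)).trans (inv_anti₀ hk (by linarith))
        push_cast
        nlinarith [mul_le_mul_of_nonneg_left hd hc, sq_nonneg (log (k + 1 + 1) - log ((k : ℝ) + 1))]
    simpa using this
  calc _ ≤ ∑ k ∈ Ico m n, (k : ℝ)⁻¹ * (log (n + 1) - log (k + 1)) := hsq
    _ ≤ ∑ k ∈ Ico m n, (k : ℝ)⁻¹ * ∑ i ∈ Ico (k + 1) (n + 1), (i : ℝ)⁻¹ := by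
      gcongr with k hk
      exact_mod_cast log_sub_log_le_sum_Ico_inv k.succ_pos (by have := (mem_Ico.1 hk).2; omega)
    _ = ∑ i ∈ Icc 1 n, (i : ℝ)⁻¹ * ∑ k ∈ Ico m i, (k : ℝ)⁻¹ := by
      simp_rw [mul_sum]
      refine (sum_comm' fun k i => ?_).trans
        (sum_congr rfl fun i _ => sum_congr rfl fun k _ => mul_comm _ _)
      simp only [mem_Ico, mem_Icc]
      omega

theorem div_mul_sum_Ico_inv_le {m i : ℕ} (hm : 1 < m) :
    (m : ℝ) / i * ∑ k ∈ Ico m i, (k : ℝ)⁻¹ ≤ m / ((m - 1) * exp 1) := by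
  have hm' : (1 : ℝ) < m := by exact_mod_cast hm
  rcases le_or_gt i m with him | hmi
  · rw [Ico_eq_empty_of_le him, sum_empty, mul_zero]
    exact div_nonneg (by linarith) (mul_nonneg (by linarith) (exp_pos 1).le)
  have hi : (m : ℝ) < i := by exact_mod_cast hmi
  have hH : ∑ k ∈ Ico m i, (k : ℝ)⁻¹ ≤ i / ((m - 1) * exp 1) :=
    calc _ ≤ log ((i : ℝ) - 1) - log ((m : ℝ) - 1) := sum_Ico_inv_le_log_sub_log hm hmi.le
      _ = log (((i : ℝ) - 1) / ((m : ℝ) - 1)) := (log_div (by linarith) (by linarith)).symm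
      _ ≤ ((i : ℝ) - 1) / ((m : ℝ) - 1) / exp 1 :=
        log_le_div_exp_one (by apply div_pos <;> linarith)
      _ ≤ i / ((m - 1) * exp 1) := by
        rw [div_div]
        gcongr
        linarith
  calc (m : ℝ) / i * ∑ k ∈ Ico m i, (k : ℝ)⁻¹ ≤ m / i * (i / ((m - 1) * exp 1)) := by gcongr
    _ = m / ((m - 1) * exp 1) := by
      have : (i : ℝ) ≠ 0 := by linarith
      field_simp

theorem div_exp_one_mul_add_one_le {m : ℕ} (hm : 0 < m) :
    (m : ℝ) / (exp 1 * m + 1) ≤ m / ⌈exp 1 * m⌉₊ * ∑ k ∈ Ico m ⌈exp 1 * m⌉₊, (k : ℝ)⁻¹ := by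
  set i := ⌈exp 1 * m⌉₊
  have hm' : (0 : ℝ) < m := by exact_mod_cast hm
  have hemi : exp 1 * m ≤ i := Nat.le_ceil _
  have hmi : m ≤ i := by
    have : (m : ℝ) ≤ i := by nlinarith [add_one_le_exp (1 : ℝ)]
    exact_mod_cast this
  have hH : 1 ≤ ∑ k ∈ Ico m i, (k : ℝ)⁻¹ := by
    have := log_le_log (by positivity) hemi
    rw [log_mul (exp_pos 1).ne' hm'.ne', log_exp] at this
    linarith [log_sub_log_le_sum_Ico_inv hm hmi]
  calc (m : ℝ) / (exp 1 * m + 1) ≤ m / i := by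
        gcongr
        exact (Nat.ceil_lt_add_one (by positivity)).le
    _ ≤ m / i * ∑ k ∈ Ico m i, (k : ℝ)⁻¹ := le_mul_of_one_le_right (by positivity) hH

theorem tendsto_div_sub_one_mul_exp_one :
    Tendsto (fun t : ℝ => t / ((t - 1) * exp 1)) atTop (𝓝 (exp 1)⁻¹) := by
  have h := ((tendsto_const_nhds (x := (1 : ℝ)).sub tendsto_inv_atTop_zero).mul_const
    (exp 1)).inv₀ (by simp)
  rw [sub_zero, one_mul] at h
  refine h.congr' ?_
  filter_upwards [eventually_gt_atTop 0] with t ht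
  field_simp

theorem tendsto_div_exp_one_mul_add_one :
    Tendsto (fun t : ℝ => t / (exp 1 * t + 1)) atTop (𝓝 (exp 1)⁻¹) := by
  have h := (tendsto_const_nhds (x := exp 1).add tendsto_inv_atTop_zero).inv₀ (by simp)
  rw [add_zero] at h
  refine h.congr' ?_
  filter_upwards [eventually_gt_atTop 0] with t ht
  field_simp

theorem sum_Icc_add_one_one_div_sub_one (m i : ℕ) :
    ∑ j ∈ Icc (m + 1) i, 1 / ((j : ℝ) - 1) = ∑ k ∈ Ico m i, (k : ℝ)⁻¹ := by
  rw [← Ico_add_one_right_eq_Icc, ← sum_Ico_add' _ m i 1]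
  simp

theorem lstar_pos {n : ℕ} (hn : 0 < n) : 0 < lstar n :=
  Nat.ceil_pos.2 (by positivity)

theorem lstar_le_self (n : ℕ) : lstar n ≤ n :=
  Nat.ceil_le.2 (div_le_self n.cast_nonneg (one_le_exp zero_le_two))

theorem cast_lstar_sub_one {n : ℕ} (hn : 0 < n) : ((lstar n - 1 : ℕ) : ℝ) = lstar n - 1 :=
  Nat.cast_pred (lstar_pos hn)

theorem cast_lstar_sub_one_lt {n : ℕ} (hn : 0 < n) : ((lstar n - 1 : ℕ) : ℝ) < n / exp 2 := by
  rw [cast_lstar_sub_one hn, sub_lt_iff_lt_add]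
  exact Nat.ceil_lt_add_one (by positivity)

theorem two_le_lstar_sub_one {n : ℕ} (hn : 15 ≤ n) : 2 ≤ lstar n - 1 := by
  suffices (2 : ℝ) < n / exp 2 by
    have : 2 < lstar n := Nat.lt_ceil.2 (by exact_mod_cast this)
    omega
  have he : exp 2 < 7.5 := by
    rw [show (2 : ℝ) = 1 + 1 by norm_num, exp_add]
    nlinarith [exp_one_lt_d9, exp_pos 1]
  rw [lt_div_iff₀ (exp_pos 2)]
  have : (15 : ℝ) ≤ n := by exact_mod_cast hn
  linarith

theorem aseq_eq {n : ℕ} (hn : 0 < n) (i : ℕ) :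
    aseq n i = ((lstar n - 1 : ℕ) : ℝ) / i * ∑ k ∈ Ico (lstar n - 1) i, (k : ℝ)⁻¹ := by
  obtain ⟨m, hm⟩ := Nat.exists_eq_add_one.2 (lstar_pos hn)
  rw [aseq, hm, Nat.add_sub_cancel]
  split_ifs with hi
  · rw [sum_Icc_add_one_one_div_sub_one]
    push_cast
    ring
  · rw [Ico_eq_empty_of_le (by omega), sum_empty, mul_zero]

theorem div_mul_sq_log_le_mean_aseq {n : ℕ} (hn : 15 ≤ n) :
    ((lstar n - 1 : ℕ) : ℝ) / n * ((log (n + 1) - log (lstar n)) ^ 2 / 2) ≤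
      1 / n * ∑ i ∈ Icc 1 n, aseq n i := by
  have hn0 : 0 < n := by omega
  have hm := two_le_lstar_sub_one hn
  have hlstar : (lstar n : ℝ) = (lstar n - 1 : ℕ) + 1 := by
    rw [cast_lstar_sub_one hn0]; ring
  rw [hlstar]
  calc _ ≤ ((lstar n - 1 : ℕ) : ℝ) / n *
        ∑ i ∈ Icc 1 n, (i : ℝ)⁻¹ * ∑ k ∈ Ico (lstar n - 1) i, (k : ℝ)⁻¹ := by
        gcongr
        exact sq_log_sub_log_div_two_le_sum_inv_mul_sum_Ico_inv (by omega)
          ((Nat.sub_le _ _).trans (lstar_le_self n))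
    _ = 1 / n * ∑ i ∈ Icc 1 n, aseq n i := by
        simp_rw [aseq_eq hn0]
        rw [mul_sum, mul_sum]
        exact sum_congr rfl fun i _ => by ring

theorem aseq_le {n : ℕ} (hn : 15 ≤ n) (i : ℕ) :
    aseq n i ≤ ((lstar n - 1 : ℕ) : ℝ) / ((((lstar n - 1 : ℕ) : ℝ) - 1) * exp 1) := by
  rw [aseq_eq (by omega)]
  exact div_mul_sum_Ico_inv_le (by have := two_le_lstar_sub_one hn; omega)

theorem mean_aseq_le {n : ℕ} (hn : 15 ≤ n) :
    1 / n * ∑ i ∈ Icc 1 n, aseq n i ≤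
      ((lstar n - 1 : ℕ) : ℝ) / ((((lstar n - 1 : ℕ) : ℝ) - 1) * exp 1) := by
  have hn0 : (0 : ℝ) < n := by exact_mod_cast (by omega : 0 < n)
  have := sum_le_card_nsmul (Icc 1 n) (aseq n) _ fun i _ => aseq_le hn i
  rw [Nat.card_Icc, Nat.add_sub_cancel, nsmul_eq_mul] at this
  rw [one_div_mul_eq_div, div_le_iff₀ hn0, mul_comm]
  exact this

theorem sSup_aseq_le {n : ℕ} (hn : 15 ≤ n) :
    sSup (aseq n '' Set.Icc 1 n) ≤
      ((lstar n - 1 : ℕ) : ℝ) / ((((lstar n - 1 : ℕ) : ℝ) - 1) * exp 1) :=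
  csSup_le ((Set.nonempty_Icc.2 (by omega)).image _)
    (Set.forall_mem_image.2 fun i _ => aseq_le hn i)

theorem le_sSup_aseq {n : ℕ} (hn : 15 ≤ n) :
    ((lstar n - 1 : ℕ) : ℝ) / (exp 1 * ((lstar n - 1 : ℕ) : ℝ) + 1) ≤
      sSup (aseq n '' Set.Icc 1 n) := by
  have hn0 : 0 < n := by omega
  have hm : 0 < lstar n - 1 := by have := two_le_lstar_sub_one hn; omega
  refine le_csSup_of_le ((Set.finite_Icc 1 n).image _).bddAbove
    ⟨⌈exp 1 * ((lstar n - 1 : ℕ) : ℝ)⌉₊, ⟨Nat.ceil_pos.2 (by positivity), Nat.ceil_le.2 ?_⟩, rfl⟩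
    (by rw [aseq_eq hn0]; exact div_exp_one_mul_add_one_le hm)
  calc exp 1 * ((lstar n - 1 : ℕ) : ℝ) ≤ exp 1 * (n / exp 2) :=
        by gcongr; exact (cast_lstar_sub_one_lt hn0).le
    _ = n / exp 1 := by rw [show (2 : ℝ) = 1 + 1 by norm_num, exp_add]; field_simp
    _ ≤ n := div_le_self n.cast_nonneg (one_le_exp zero_le_one)

theorem sub_one_le_cast_lstar_sub_one {n : ℕ} (hn : 0 < n) :
    n / exp 2 - 1 ≤ ((lstar n - 1 : ℕ) : ℝ) := by
  rw [cast_lstar_sub_one hn]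
  exact sub_le_sub_right (Nat.le_ceil _) 1

theorem tendsto_cast_lstar_sub_one_atTop :
    Tendsto (fun n : ℕ => ((lstar n - 1 : ℕ) : ℝ)) atTop atTop := by
  refine tendsto_atTop_mono' atTop ?_ <| tendsto_atTop_add_const_right _ (-1) <|
    tendsto_natCast_atTop_atTop.atTop_div_const (exp_pos 2)
  filter_upwards [eventually_gt_atTop 0] with n hn
  exact sub_one_le_cast_lstar_sub_one hn

theorem tendsto_cast_lstar_sub_one_div :
    Tendsto (fun n : ℕ => ((lstar n - 1 : ℕ) : ℝ) / n) atTop (𝓝 (exp (-2))) := by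
  have hlow : Tendsto (fun n : ℕ => exp (-2) - 1 / (n : ℝ)) atTop (𝓝 (exp (-2))) := by
    simpa using tendsto_const_nhds.sub (tendsto_one_div_atTop_nhds_zero_nat (𝕜 := ℝ))
  refine tendsto_of_tendsto_of_tendsto_of_le_of_le' hlow tendsto_const_nhds ?_ ?_ <;>
    filter_upwards [eventually_gt_atTop 0] with n hn
  · have hn' : (0 : ℝ) < n := by exact_mod_cast hn
    rw [le_div_iff₀ hn', sub_mul, one_div_mul_cancel hn'.ne', exp_neg, ← div_eq_inv_mul]
    exact sub_one_le_cast_lstar_sub_one hn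
  · rw [div_le_iff₀ (by exact_mod_cast hn), exp_neg, ← div_eq_inv_mul]
    exact (cast_lstar_sub_one_lt hn).le

theorem tendsto_log_add_one_sub_log_lstar :
    Tendsto (fun n : ℕ => log (n + 1) - log (lstar n)) atTop (𝓝 2) := by
  have hdiv : Tendsto (fun n : ℕ => (lstar n : ℝ) / n) atTop (𝓝 (exp (-2))) := by
    have := tendsto_cast_lstar_sub_one_div.add (tendsto_one_div_atTop_nhds_zero_nat (𝕜 := ℝ))
    rw [add_zero] at this
    refine this.congr' ?_
    filter_upwards [eventually_gt_atTop 0] with n hn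
    rw [cast_lstar_sub_one hn, ← add_div, sub_add_cancel]
  have := tendsto_log_nat_add_one_sub_log.sub (hdiv.log (exp_pos _).ne')
  rw [log_exp, zero_sub, neg_neg] at this
  refine this.congr' ?_
  filter_upwards [eventually_gt_atTop 0] with n hn
  rw [log_div (by exact_mod_cast (lstar_pos hn).ne') (by exact_mod_cast hn.ne')]
  ring

theorem tendsto_div_mul_sq_log :
    Tendsto (fun n : ℕ => ((lstar n - 1 : ℕ) : ℝ) / n * ((log (n + 1) - log (lstar n)) ^ 2 / 2))
      atTop (𝓝 (2 / exp 2)) := by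
  have := tendsto_cast_lstar_sub_one_div.mul ((tendsto_log_add_one_sub_log_lstar.pow 2).div_const 2)
  rwa [exp_neg, show (2 : ℝ) ^ 2 / 2 = 2 by norm_num, inv_mul_eq_div] at this

theorem le_liminf_mean_aseq :
    2 / exp 2 ≤ liminf (fun n : ℕ => 1 / (n : ℝ) * ∑ i ∈ Icc 1 n, aseq n i) atTop := by
  have hbdd : ∀ᶠ n : ℕ in atTop, 1 / (n : ℝ) * ∑ i ∈ Icc 1 n, aseq n i ≤ 1 := by
    filter_upwards [eventually_ge_atTop 15,
      (tendsto_div_sub_one_mul_exp_one.comp tendsto_cast_lstar_sub_one_atTop).eventually_le_const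
        (inv_lt_one_of_one_lt₀ (one_lt_exp_iff.2 one_pos))] with n hn hU
    exact (mean_aseq_le hn).trans hU
  rw [← tendsto_div_mul_sq_log.liminf_eq]
  exact liminf_le_liminf ((eventually_ge_atTop 15).mono fun n hn => div_mul_sq_log_le_mean_aseq hn)
    tendsto_div_mul_sq_log.isBoundedUnder_ge (isCoboundedUnder_ge_of_eventually_le atTop hbdd)

theorem tendsto_sSup_aseq :
    Tendsto (fun n : ℕ => sSup (aseq n '' Set.Icc 1 n)) atTop (𝓝 (exp 1)⁻¹) :=
  tendsto_of_tendsto_of_tendsto_of_le_of_le'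
    (tendsto_div_exp_one_mul_add_one.comp tendsto_cast_lstar_sub_one_atTop)
    (tendsto_div_sub_one_mul_exp_one.comp tendsto_cast_lstar_sub_one_atTop)
    ((eventually_ge_atTop 15).mono fun _ => le_sSup_aseq)
    ((eventually_ge_atTop 15).mono fun _ => sSup_aseq_le)

theorem stmt15 :
    2 / Real.exp 2 ≤
      Filter.liminf (fun n : ℕ => (1 / (n : ℝ)) * ∑ i ∈ Finset.Icc 1 n, aseq n i)
        Filter.atTop ∧
    Filter.Tendsto (fun n : ℕ => sSup (aseq n '' Set.Icc 1 n)) Filter.atTop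
      (nhds (1 / Real.exp 1)) :=
  ⟨le_liminf_mean_aseq, one_div (exp 1) ▸ tendsto_sSup_aseq⟩
end
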